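/- arXiv:1903.06426 — 2 statements merged into one kernel-verified Lean document; each statement's English description precedes it below -/
import Mathlib

section
/- Let n ≥ 2 and let p be any prime. For a transposition t = (i j) of S_n with i < j, set α_t := e_i − e_j ∈ 𝔽_p^{n−1} if j < n and α_t := e_i if j = n, where e_1, …, e_{n−1} is the standard basis of 𝔽_p^{n−1}. Then the map sending w ∈ NC(S_n) to the p-moved space M_p(w) := span_{𝔽_p}{α_t : t a transposition with t ≤ w in absolute order} is a rank-preserving poset embedding: it is order-preserving, injective, and dim_{𝔽_p} M_p(w) = ℓ(w) for all w ∈ NC(S_n). -/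
/-- The absolute length of `w` with respect to a set `T`:
the least `k` such that `w` is a product of `k` elements of `T`. -/
noncomputable def absLength {G : Type*} [Group G] (T : Set G) (w : G) : ℕ :=
  sInf {k : ℕ | ∃ l : List G, l.length = k ∧ (∀ t ∈ l, t ∈ T) ∧ l.prod = w}

/-- The absolute order with respect to `T` : `u ≤ w` iff `ℓ(w) = ℓ(u) + ℓ(u⁻¹w)`. -/
def absLe {G : Type*} [Group G] (T : Set G) (u w : G) : Prop :=
  absLength T w = absLength T u + absLength T (u⁻¹ * w)

/-- The vector `e_i ∈ 𝔽ₚⁿ⁻¹` for `i` among the first `n-1` indices, and `0` for the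
last index (`e_n := 0`). -/
def vecP (p n : ℕ) (i : Fin n) : Fin (n - 1) → ZMod p :=
  fun k => if (k : ℕ) = (i : ℕ) then 1 else 0

/-- The `p`-moved space of a permutation `w` of `{1, …, n}`: the span of the roots
`α_t = e_i - e_j` (with `e_n := 0`) over all transpositions `t = (i j)`, `i < j`,
with `t ≤ w` in the absolute order. -/
noncomputable def pMovedSpace (p n : ℕ) (w : Equiv.Perm (Fin n)) :
    Submodule (ZMod p) (Fin (n - 1) → ZMod p) :=
  Submodule.span (ZMod p)
    {x | ∃ i j : Fin n, i < j ∧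
        absLe {t : Equiv.Perm (Fin n) | t.IsSwap} (Equiv.swap i j) w ∧
        x = vecP p n i - vecP p n j}

/-!
Let `M(w) ⊆ Kⁿ` be the range of `x ↦ x ∘ w - x`. It is spanned by the roots `eᵢ - eⱼ` with `i`, `j`
in one cycle of `w`, and contains no other root: the indicator of a cycle is `w`-invariant, hence
orthogonal to `M(w)`. Multiplying `w` by a transposition changes `M(w)` by at most a line, and
`M((a w(a)) w) < M(w)`, so `dim M(w) = ℓ(w)`. Together with the parity of `ℓ` this shows that
`(a b) ≤ w` iff `a` and `b` lie in one cycle of `w`. Hence `M_p(w)` is the image of `M(w)` under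
forgetting the last coordinate, which is injective on sum-zero vectors; this gives the rank and,
with transitivity of `≤`, monotonicity.

For injectivity: every `w ≤ c` is cyclically increasing (each `w(i)` is the first element of the
cycle of `i` after `i` in the cyclic order of `1, …, n`), since `c` is, and splitting a cycle of a
cyclically increasing permutation by a transposition of two of its elements preserves this.
A cyclically increasing permutation is determined by its cycles, which `M_p(w)` determines.
-/

open Equiv Equiv.Perm Module

local notation "ℓ" => absLength (Set.ofPred Equiv.Perm.IsSwap)
local infix:50 " ≤ₐ " => absLe (Set.ofPred Equiv.Perm.IsSwap)

theorem Submodule.finrank_sup_span_singleton_le {K V : Type*} [Field K] [AddCommGroup V]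
    [Module K V] [FiniteDimensional K V] (p : Submodule K V) (v : V) :
    finrank K ↥(p ⊔ K ∙ v) ≤ finrank K p + 1 := by
  by_cases hv : v ∈ p
  · rw [sup_eq_left.mpr ((span_singleton_le_iff_mem v p).mpr hv)]
    exact Nat.le_succ _
  · exact (finrank_sup_span_singleton hv).le

theorem Equiv.Perm.SameCycle.of_forall_sameCycle_apply {α : Type*} [Finite α] {f g : Perm α}
    (hfg : ∀ k, f.SameCycle k (g k)) {i j : α} (h : g.SameCycle i j) : f.SameCycle i j := by
  obtain ⟨m, rfl⟩ := h.exists_nat_pow_eq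
  clear h
  induction m with
  | zero => rfl
  | succ m ih => exact ih.trans (by rw [pow_succ', Perm.mul_apply]; exact hfg _)

theorem Equiv.Perm.SameCycle.of_mul_swap {α : Type*} [Finite α] [DecidableEq α] {v : Perm α}
    {a b : α} (hab : v.SameCycle a b) {i j : α} (h : (v * swap a b).SameCycle i j) :
    v.SameCycle i j := by
  refine h.of_forall_sameCycle_apply fun k => ?_
  have hstep : ∀ k, v.SameCycle k (v k) := fun k => sameCycle_apply_right.mpr (.refl _ k)
  rw [Perm.mul_apply, swap_apply_def]
  split_ifs with hka hkb
  · exact hka ▸ hab.trans (hstep b)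
  · exact hkb ▸ hab.symm.trans (hstep a)
  · exact hstep k

section AbsoluteLength

variable {α : Type*} [DecidableEq α]

theorem absLength_le_length {l : List (Perm α)} (hl : ∀ t ∈ l, t.IsSwap) : ℓ l.prod ≤ l.length :=
  Nat.sInf_le ⟨l, rfl, hl, rfl⟩

variable [Fintype α]

theorem exists_swap_list_length_eq_absLength (w : Perm α) :
    ∃ l : List (Perm α), l.length = ℓ w ∧ (∀ t ∈ l, t.IsSwap) ∧ l.prod = w := by
  obtain ⟨l, hprod, hswap⟩ := (truncSwapFactors w).out
  exact Nat.sInf_mem (s := {k | ∃ l : List (Perm α), l.length = k ∧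
    (∀ t ∈ l, t ∈ Set.ofPred IsSwap) ∧ l.prod = w}) ⟨l.length, l, rfl, hswap, hprod⟩

theorem absLength_eq_zero {w : Perm α} : ℓ w = 0 ↔ w = 1 := by
  refine ⟨fun h => ?_, fun h => ?_⟩
  · obtain ⟨l, hlen, -, rfl⟩ := exists_swap_list_length_eq_absLength w
    simp [List.eq_nil_of_length_eq_zero (hlen.trans h)]
  · simpa [h] using absLength_le_length (l := ([] : List (Perm α))) (by simp)

theorem absLength_swap {a b : α} (hab : a ≠ b) : ℓ (swap a b) = 1 := by
  have hle := absLength_le_length (l := [swap a b]) (by simpa using ⟨a, b, hab, rfl⟩)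
  have hne : ℓ (swap a b) ≠ 0 := absLength_eq_zero.not.mpr (by simpa [swap_eq_one_iff] using hab)
  simp only [List.prod_singleton, List.length_singleton] at hle
  omega

theorem absLength_mul_le (u v : Perm α) : ℓ (u * v) ≤ ℓ u + ℓ v := by
  obtain ⟨l, hl, hls, rfl⟩ := exists_swap_list_length_eq_absLength u
  obtain ⟨m, hm, hms, rfl⟩ := exists_swap_list_length_eq_absLength v
  rw [← List.prod_append, ← hl, ← hm, ← List.length_append]
  exact absLength_le_length (by simpa [or_imp, forall_and] using ⟨hls, hms⟩)

theorem absLength_swap_mul_le (a b : α) (w : Perm α) : ℓ (swap a b * w) ≤ ℓ w + 1 := by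
  rcases eq_or_ne a b with rfl | hab
  · simp [swap_self, ← Perm.one_def]
  · simpa [absLength_swap hab, add_comm] using absLength_mul_le (swap a b) w

theorem sign_eq_neg_one_pow_absLength (w : Perm α) : sign w = (-1) ^ ℓ w := by
  obtain ⟨l, hl, hls, rfl⟩ := exists_swap_list_length_eq_absLength w
  rw [sign_prod_list_swap hls, hl]

theorem absLength_swap_mul_ne {a b : α} (hab : a ≠ b) (w : Perm α) :
    ℓ (swap a b * w) ≠ ℓ w := by
  intro h
  have := sign_eq_neg_one_pow_absLength (swap a b * w)
  rw [Perm.sign_mul, sign_swap hab, sign_eq_neg_one_pow_absLength w, h, neg_one_mul] at this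
  exact neg_units_ne_self _ this

theorem absLe_trans {u v w : Perm α} (huv : u ≤ₐ v) (hvw : v ≤ₐ w) : u ≤ₐ w := by
  unfold absLe at *
  have h₁ := absLength_mul_le u (u⁻¹ * w)
  have h₂ := absLength_mul_le (u⁻¹ * v) (v⁻¹ * w)
  simp only [mul_inv_cancel_left, mul_assoc] at h₁ h₂
  omega

theorem exists_mul_swap_absLe {w c : Perm α} (h : w ≤ₐ c) (hne : w ≠ c) :
    ∃ a b, a ≠ b ∧ w * swap a b ≤ₐ c ∧ ℓ (w * swap a b) = ℓ w + 1 := by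
  obtain ⟨l, hl, hls, hprod⟩ := exists_swap_list_length_eq_absLength (w⁻¹ * c)
  rcases l with _ | ⟨t, l⟩
  · exact absurd (inv_mul_eq_one.mp hprod.symm) hne
  obtain ⟨a, b, hab, rfl⟩ := hls t List.mem_cons_self
  have hrest : (w * swap a b)⁻¹ * c = l.prod := by
    rw [mul_inv_rev, swap_inv, mul_assoc, ← hprod, List.prod_cons, swap_mul_self_mul]
  have h₁ := absLength_le_length fun s hs => hls s (List.mem_cons_of_mem _ hs)
  have h₂ := absLength_mul_le w (swap a b)
  have h₃ := absLength_mul_le (w * swap a b) ((w * swap a b)⁻¹ * c)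
  rw [absLength_swap hab] at h₂
  rw [mul_inv_cancel_left, hrest] at h₃
  rw [List.length_cons] at hl
  unfold absLe at h ⊢
  exact ⟨a, b, hab, by rw [hrest]; omega, by omega⟩

end AbsoluteLength

section MovedSpace

variable {α : Type*} {K : Type*} [Field K]

variable (K) in
def movedSpace (w : Perm α) : Submodule K (α → K) :=
  LinearMap.range (LinearMap.funLeft K K w - LinearMap.id)

theorem movedSpace_one : movedSpace K (1 : Perm α) = ⊥ :=
  LinearMap.range_eq_bot.mpr (by ext; simp)

theorem movedSpace_mul_le (s v : Perm α) :
    movedSpace K (s * v) ≤ movedSpace K s ⊔ movedSpace K v := by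
  rintro _ ⟨x, rfl⟩
  refine Submodule.mem_sup.mpr ⟨_, ⟨x, rfl⟩, _, ⟨LinearMap.funLeft K K s x, rfl⟩, ?_⟩
  ext k
  simp

theorem sum_mul_eq_zero_of_mem_movedSpace [Fintype α] {w : Perm α} {y x : α → K}
    (hy : ∀ k, y (w k) = y k) (hx : x ∈ movedSpace K w) : ∑ k, y k * x k = 0 := by
  obtain ⟨z, rfl⟩ := hx
  have : ∑ k, y k * z (w k) = ∑ k, y k * z k := by
    simpa only [hy] using Equiv.sum_comp w (fun k => y k * z k)
  simp [mul_sub, Finset.sum_sub_distrib, this]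

theorem sum_eq_zero_of_mem_movedSpace [Fintype α] {w : Perm α} {x : α → K}
    (hx : x ∈ movedSpace K w) : ∑ k, x k = 0 := by
  simpa using sum_mul_eq_zero_of_mem_movedSpace (y := 1) (fun _ => rfl) hx

variable [DecidableEq α]

theorem single_sub_single_apply_mem_movedSpace (w : Perm α) (k : α) :
    Pi.single k (1 : K) - Pi.single (w k) 1 ∈ movedSpace K w :=
  ⟨Pi.single (w k) 1, by ext; simp [Pi.single_apply, w.injective.eq_iff]⟩

theorem movedSpace_swap_le (a b : α) :
    movedSpace K (swap a b) ≤ K ∙ (Pi.single a 1 - Pi.single b 1) := by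
  rintro _ ⟨x, rfl⟩
  refine Submodule.mem_span_singleton.mpr ⟨x b - x a, ?_⟩
  ext k
  rcases eq_or_ne k a with rfl | hka
  · rcases eq_or_ne k b with rfl | hkb <;> simp [*]
  rcases eq_or_ne k b with rfl | hkb
  · simp [hka]
  · simp [swap_apply_of_ne_of_ne hka hkb, hka, hkb]

theorem movedSpace_swap_mul_le (a b : α) (w : Perm α) :
    movedSpace K (swap a b * w) ≤ movedSpace K w ⊔ K ∙ (Pi.single a 1 - Pi.single b 1) :=
  (movedSpace_mul_le _ _).trans
    ((sup_le_sup_right (movedSpace_swap_le a b) _).trans_eq (sup_comm _ _))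

theorem movedSpace_swap_mul_sup (a b : α) (w : Perm α) :
    movedSpace K (swap a b * w) ⊔ K ∙ (Pi.single a 1 - Pi.single b 1) =
      movedSpace K w ⊔ K ∙ (Pi.single a 1 - Pi.single b 1) := by
  refine le_antisymm (sup_le (movedSpace_swap_mul_le a b w) le_sup_right) (sup_le ?_ le_sup_right)
  simpa using movedSpace_swap_mul_le (K := K) a b (swap a b * w)

variable [Fintype α]

theorem single_sub_single_mem_movedSpace {w : Perm α} {i j : α} (h : w.SameCycle i j) :
    Pi.single i (1 : K) - Pi.single j 1 ∈ movedSpace K w := by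
  obtain ⟨m, rfl⟩ := h.exists_nat_pow_eq
  clear h
  induction m with
  | zero => simp
  | succ m ih =>
    rw [pow_succ', Perm.mul_apply, ← sub_add_sub_cancel _ (Pi.single ((w ^ m) i) 1)]
    exact add_mem ih (single_sub_single_apply_mem_movedSpace w _)

theorem single_sub_single_mem_movedSpace_iff {w : Perm α} {i j : α} :
    Pi.single i (1 : K) - Pi.single j 1 ∈ movedSpace K w ↔ w.SameCycle i j := by
  refine ⟨fun h => ?_, single_sub_single_mem_movedSpace⟩
  by_contra hij
  have := sum_mul_eq_zero_of_mem_movedSpace (y := fun k => if w.SameCycle i k then 1 else 0)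
    (fun k => by simp only [sameCycle_apply_right]) h
  simp [mul_sub, Finset.sum_sub_distrib, Pi.single_apply, hij, SameCycle.refl] at this

theorem movedSpace_eq_span (w : Perm α) : movedSpace K w =
    Submodule.span K {x | ∃ i j, w.SameCycle i j ∧ x = Pi.single i 1 - Pi.single j 1} := by
  refine le_antisymm ?_ (Submodule.span_le.mpr ?_)
  · rw [movedSpace, LinearMap.range_eq_map, ← (Pi.basisFun K α).span_eq, Submodule.map_span_le]
    rintro _ ⟨k, rfl⟩
    obtain ⟨m, rfl⟩ := w.surjective k
    refine Submodule.subset_span ⟨m, w m, sameCycle_apply_right.mpr (SameCycle.refl _ _), ?_⟩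
    ext; simp [Pi.single_apply, w.injective.eq_iff]
  · rintro _ ⟨i, j, h, rfl⟩
    exact single_sub_single_mem_movedSpace h

end MovedSpace

section RankFormula

variable {α : Type*} [Fintype α] [DecidableEq α] {K : Type*} [Field K]

theorem movedSpace_swap_mul_le_of_sameCycle {w : Perm α} {a b : α} (h : w.SameCycle a b) :
    movedSpace K (swap a b * w) ≤ movedSpace K w :=
  (movedSpace_swap_mul_le a b w).trans
    (sup_le le_rfl ((Submodule.span_singleton_le_iff_mem _ _).mpr
      (single_sub_single_mem_movedSpace h)))

theorem finrank_movedSpace_swap_mul_le (a b : α) (w : Perm α) :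
    finrank K (movedSpace K (swap a b * w)) ≤ finrank K (movedSpace K w) + 1 :=
  (Submodule.finrank_mono (movedSpace_swap_mul_le a b w)).trans
    (Submodule.finrank_sup_span_singleton_le _ _)

theorem finrank_movedSpace_le_absLength (w : Perm α) : finrank K (movedSpace K w) ≤ ℓ w := by
  obtain ⟨l, hl, hls, rfl⟩ := exists_swap_list_length_eq_absLength w
  rw [← hl]
  clear hl
  induction l with
  | nil =>
    rw [List.prod_nil, movedSpace_one, finrank_bot]
    exact Nat.zero_le _
  | cons t l ih =>
    obtain ⟨a, b, -, rfl⟩ := hls t List.mem_cons_self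
    rw [List.prod_cons, List.length_cons]
    exact (finrank_movedSpace_swap_mul_le a b l.prod).trans
      (Nat.add_le_add_right (ih fun s hs => hls s (List.mem_cons_of_mem _ hs)) 1)

theorem absLength_le_finrank_movedSpace (w : Perm α) : ℓ w ≤ finrank K (movedSpace K w) := by
  induction hw : finrank K (movedSpace K w) using Nat.strong_induction_on generalizing w with
  | _ r ih =>
  by_cases h1 : w = 1
  · simp [h1, absLength_eq_zero.mpr]
  obtain ⟨a, ha⟩ : ∃ a, w a ≠ a := by
    by_contra! h
    exact h1 (Equiv.ext h)
  set v := swap a (w a) * w with hv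
  have hsc : w.SameCycle a (w a) := sameCycle_apply_right.mpr (SameCycle.refl _ a)
  have hlt : movedSpace K v < movedSpace K w := by
    refine lt_of_le_of_ne (movedSpace_swap_mul_le_of_sameCycle hsc) fun heq => ha ?_
    have hvsc := single_sub_single_mem_movedSpace (K := K) hsc
    rw [← heq, single_sub_single_mem_movedSpace_iff] at hvsc
    exact (hvsc.eq_of_left (by simp [v, Function.IsFixedPt])).symm
  have hrank := hw ▸ Submodule.finrank_lt_finrank_of_lt hlt
  calc ℓ w = ℓ (swap a (w a) * v) := by rw [hv, swap_mul_self_mul]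
    _ ≤ ℓ v + 1 := absLength_swap_mul_le _ _ _
    _ ≤ r := by linarith [ih _ hrank v rfl]

theorem finrank_movedSpace (w : Perm α) : finrank K (movedSpace K w) = ℓ w :=
  (finrank_movedSpace_le_absLength w).antisymm (absLength_le_finrank_movedSpace w)

end RankFormula

section SwapCriterion

variable {α : Type*} [Fintype α] [DecidableEq α]

theorem absLength_swap_mul_lt_iff {a b : α} (hab : a ≠ b) (w : Perm α) :
    ℓ (swap a b * w) < ℓ w ↔ w.SameCycle a b := by
  have hne := absLength_swap_mul_ne hab w
  rw [← finrank_movedSpace (K := ℚ), ← finrank_movedSpace (K := ℚ)] at hne ⊢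
  refine ⟨fun hlt => ?_, fun h =>
    (Submodule.finrank_mono (movedSpace_swap_mul_le_of_sameCycle h)).lt_of_ne hne⟩
  -- otherwise `eₐ - e_b ∉ M(w)`, while `M(w)` and `M((a b) w)` span the same space with it
  by_contra h
  have hup := Submodule.finrank_sup_span_singleton
    (mt (single_sub_single_mem_movedSpace_iff (K := ℚ) (w := w)).mp h)
  rw [← movedSpace_swap_mul_sup] at hup
  have := Submodule.finrank_sup_span_singleton_le (movedSpace ℚ (swap a b * w))
    (Pi.single a 1 - Pi.single b 1)
  omega

theorem absLength_mul_swap_lt_iff {a b : α} (hab : a ≠ b) (w : Perm α) :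
    ℓ (w * swap a b) < ℓ w ↔ w.SameCycle a b := by
  rw [← inv_mul_cancel_right (w * swap a b) w, ← swap_apply_apply,
    absLength_swap_mul_lt_iff (w.injective.ne hab), sameCycle_apply_left, sameCycle_apply_right]

theorem swap_absLe_iff_sameCycle {a b : α} (hab : a ≠ b) {w : Perm α} :
    swap a b ≤ₐ w ↔ w.SameCycle a b := by
  rw [← absLength_swap_mul_lt_iff hab, absLe, swap_inv, absLength_swap hab]
  have h₁ := absLength_swap_mul_le a b w
  have h₂ := absLength_swap_mul_le a b (swap a b * w)
  rw [swap_mul_self_mul] at h₂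
  have := absLength_swap_mul_ne hab w
  omega

end SwapCriterion

section CyclicOrder

variable {n : ℕ}

/-- The number of steps from `a` to `j` along `finRotate n`, taken in `[1, n]`. -/
def cyclicGap (a j : Fin n) : ℕ := (j + n - 1 - a) % n + 1

theorem one_le_cyclicGap (a j : Fin n) : 1 ≤ cyclicGap a j := Nat.le_add_left 1 _

theorem cyclicGap_le (a j : Fin n) : cyclicGap a j ≤ n :=
  Nat.mod_lt _ a.pos

theorem add_cyclicGap_mod (a j : Fin n) : (a + cyclicGap a j) % n = j := by
  have h : j + n - 1 - a + (a + 1) = j + n := by omega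
  rw [cyclicGap, add_left_comm, Nat.mod_add_mod, h, Nat.add_mod_right, Nat.mod_eq_of_lt j.isLt]

theorem eq_cyclicGap {a j : Fin n} {m : ℕ} (h₁ : 1 ≤ m) (h₂ : m ≤ n) (h : (a + m) % n = j) :
    m = cyclicGap a j := by
  have hmod : m ≡ cyclicGap a j [MOD n] :=
    Nat.ModEq.add_left_cancel' (a : ℕ) (h.trans (add_cyclicGap_mod a j).symm)
  have := one_le_cyclicGap a j
  have := cyclicGap_le a j
  exact hmod.eq_of_abs_lt (by rw [abs_lt]; constructor <;> omega)

theorem cyclicGap_self (a : Fin n) : cyclicGap a a = n :=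
  (eq_cyclicGap a.pos le_rfl (by rw [Nat.add_mod_right, Nat.mod_eq_of_lt a.isLt])).symm

theorem cyclicGap_injective (a : Fin n) : Function.Injective (cyclicGap a) := fun j j' h =>
  Fin.ext (by rw [← add_cyclicGap_mod a j, ← add_cyclicGap_mod a j', h])

theorem cyclicGap_add_cyclicGap (a y z : Fin n) :
    cyclicGap a y + cyclicGap y z = cyclicGap a z ∨
      cyclicGap a y + cyclicGap y z = cyclicGap a z + n := by
  have := one_le_cyclicGap a y
  have := one_le_cyclicGap y z
  have := cyclicGap_le a y
  have := cyclicGap_le y z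
  have hsum : (a + (cyclicGap a y + cyclicGap y z)) % n = z := by
    rw [← add_assoc, ← Nat.mod_add_mod, add_cyclicGap_mod, add_cyclicGap_mod]
  rcases le_or_gt (cyclicGap a y + cyclicGap y z) n with h | h
  · exact .inl (eq_cyclicGap (by omega) h hsum)
  · refine .inr (Nat.eq_add_of_sub_eq h.le (eq_cyclicGap (by omega) (by omega) ?_))
    rwa [show (a : ℕ) + (cyclicGap a y + cyclicGap y z) =
      a + (cyclicGap a y + cyclicGap y z - n) + n by omega, Nat.add_mod_right] at hsum

theorem cyclicGap_add_cyclicGap_of_lt {a y z : Fin n} (h : cyclicGap a y < cyclicGap a z) :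
    cyclicGap a y + cyclicGap y z = cyclicGap a z :=
  (cyclicGap_add_cyclicGap a y z).resolve_right (by have := cyclicGap_le y z; omega)

theorem cyclicGap_add_cyclicGap_symm {a y : Fin n} (h : a ≠ y) :
    cyclicGap a y + cyclicGap y a = n := by
  have hne : cyclicGap a y ≠ n := fun hn =>
    h (cyclicGap_injective a (hn.trans (cyclicGap_self a).symm)).symm
  have := cyclicGap_le a y
  have := cyclicGap_le y a
  rcases cyclicGap_add_cyclicGap a y a with h' | h' <;> rw [cyclicGap_self] at h' <;> omega

theorem cyclicGap_le_add_cyclicGap (a y z : Fin n) :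
    cyclicGap a z ≤ cyclicGap a y + cyclicGap y z := by
  rcases cyclicGap_add_cyclicGap a y z with h | h <;> omega

/-- Read from any of its elements, each cycle of `w` lists its elements in the cyclic order
`0 < 1 < ⋯ < n - 1 < 0`. -/
def CyclicallyIncreasing (w : Perm (Fin n)) : Prop :=
  ∀ i j, w.SameCycle i j → cyclicGap i (w i) ≤ cyclicGap i j

theorem cyclicallyIncreasing_finRotate : CyclicallyIncreasing (finRotate n) := by
  rintro i j -
  refine le_of_eq_of_le (eq_cyclicGap le_rfl i.pos ?_).symm (one_le_cyclicGap i j)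
  obtain ⟨m, rfl⟩ := Nat.exists_eq_succ_of_ne_zero i.pos.ne'
  rw [finRotate_apply, Fin.val_add, Fin.val_one', Nat.add_mod_mod]

namespace CyclicallyIncreasing

/-- The cycle of `a` in `v * swap a b` runs along the cycle of `v` from `v b` to `a`; it stays in
the cyclic interval `(b, a]`. -/
theorem cyclicGap_mul_swap_pow_le {v : Perm (Fin n)} (hv : CyclicallyIncreasing v) {a b : Fin n}
    (hs : v.SameCycle a b) (m : ℕ) :
    cyclicGap b (((v * swap a b) ^ m) a) ≤ cyclicGap b a := by
  induction m with
  | zero => simp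
  | succ m ih =>
    set k := ((v * swap a b) ^ m) a with hk
    rw [pow_succ', Perm.mul_apply, ← hk]
    rcases eq_or_ne k a with hka | hka
    · rw [hka, Perm.mul_apply, swap_apply_left]
      exact hv b _ hs.symm
    have hlt : cyclicGap b k < cyclicGap b a :=
      ih.lt_of_ne fun h => hka (cyclicGap_injective b h)
    have hkb : k ≠ b := by
      rintro hkb
      rw [hkb, cyclicGap_self] at hlt
      exact hlt.not_ge (cyclicGap_le b a)
    have hka' : v.SameCycle k a := (hs.of_mul_swap ⟨m, hk.symm⟩).symm
    rw [Perm.mul_apply, swap_apply_of_ne_of_ne hka hkb]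
    have := hv k a hka'
    have := cyclicGap_add_cyclicGap_of_lt hlt
    have := cyclicGap_le_add_cyclicGap b k (v k)
    omega

theorem cyclicGap_apply_le_of_sameCycle_mul_swap {v : Perm (Fin n)} (hv : CyclicallyIncreasing v)
    {a b : Fin n} (hs : v.SameCycle a b) {j : Fin n}
    (hj : (v * swap a b).SameCycle a j) : cyclicGap a (v b) ≤ cyclicGap a j := by
  rcases eq_or_ne j a with rfl | hja
  · exact (cyclicGap_self j).symm ▸ cyclicGap_le j (v b)
  obtain ⟨m, rfl⟩ := hj.exists_nat_pow_eq
  set j := ((v * swap a b) ^ m) a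
  have hjlt : cyclicGap b j < cyclicGap b a :=
    (hv.cyclicGap_mul_swap_pow_le hs m).lt_of_ne fun h => hja (cyclicGap_injective b h)
  have hvb : cyclicGap b (v b) ≤ cyclicGap b j := hv b j (hs.symm.trans (hs.of_mul_swap hj))
  have hvba : v b ≠ a := fun h => (h ▸ hvb).not_gt hjlt
  have := cyclicGap_add_cyclicGap_of_lt hjlt
  have := cyclicGap_add_cyclicGap_of_lt (hvb.trans_lt hjlt)
  have := cyclicGap_add_cyclicGap_symm hja.symm
  have := cyclicGap_add_cyclicGap_symm hvba.symm
  omega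

theorem mul_swap {v : Perm (Fin n)} (hv : CyclicallyIncreasing v) {a b : Fin n} (hab : a ≠ b)
    (hs : v.SameCycle a b) : CyclicallyIncreasing (v * swap a b) := by
  intro i j hij
  rcases eq_or_ne i a with rfl | hia
  · rw [Perm.mul_apply, swap_apply_left]
    exact hv.cyclicGap_apply_le_of_sameCycle_mul_swap hs hij
  rcases eq_or_ne i b with rfl | hib
  · rw [Perm.mul_apply, swap_apply_right]
    rw [swap_comm] at hij
    exact hv.cyclicGap_apply_le_of_sameCycle_mul_swap hs.symm hij
  · rw [Perm.mul_apply, swap_apply_of_ne_of_ne hia hib]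
    exact hv i j (hs.of_mul_swap hij)

theorem eq_of_sameCycle_iff {u w : Perm (Fin n)} (hu : CyclicallyIncreasing u)
    (hw : CyclicallyIncreasing w) (h : ∀ i j, u.SameCycle i j ↔ w.SameCycle i j) : u = w :=
  Equiv.ext fun i => cyclicGap_injective i <| le_antisymm
    (hu i _ ((h i _).mpr (sameCycle_apply_right.mpr (.refl _ i))))
    (hw i _ ((h i _).mp (sameCycle_apply_right.mpr (.refl _ i))))

end CyclicallyIncreasing

theorem cyclicallyIncreasing_of_absLe_finRotate {w : Perm (Fin n)}
    (h : w ≤ₐ finRotate n) : CyclicallyIncreasing w := by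
  induction hk : ℓ (finRotate n) - ℓ w generalizing w with
  | zero =>
    have : w = finRotate n := by
      unfold absLe at h
      rw [← inv_mul_eq_one, ← absLength_eq_zero]
      omega
    exact this ▸ cyclicallyIncreasing_finRotate
  | succ k ih =>
    obtain ⟨a, b, hab, hle, hlen⟩ := exists_mul_swap_absLe h (by rintro rfl; simp at hk)
    have hs : (w * swap a b).SameCycle a b :=
      (absLength_mul_swap_lt_iff hab _).mp (by rw [mul_swap_mul_self]; omega)
    simpa [mul_swap_mul_self] using (ih hle (by omega)).mul_swap hab hs

end CyclicOrder

section PMovedSpace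

variable (R : Type*) [Semiring R] in
def dropLast (n : ℕ) : (Fin n → R) →ₗ[R] (Fin (n - 1) → R) :=
  LinearMap.funLeft R R (Fin.castLE (Nat.sub_le n 1))

theorem dropLast_injOn {R : Type*} [Ring R] (n : ℕ) :
    Set.InjOn (dropLast R n) {x | ∑ k, x k = 0} := by
  intro x hx y hy hxy
  rw [← sub_eq_zero] at hxy ⊢
  have hinit : ∀ k : Fin n, (k : ℕ) < n - 1 → (x - y) k = 0 := fun k hk =>
    congrFun ((map_sub (dropLast R n) x y).trans hxy) ⟨k, hk⟩
  funext k
  by_cases hk : (k : ℕ) < n - 1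
  · exact hinit k hk
  have hsum : ∑ j, (x - y) j = 0 := by simp [Finset.sum_sub_distrib, hx.out, hy.out]
  rwa [Finset.sum_eq_single k (fun j _ hjk => hinit j (by have := Fin.val_ne_of_ne hjk; omega))
    (by simp)] at hsum

variable {p n : ℕ}

theorem pMovedSpace_mono {u w : Perm (Fin n)} (h : u ≤ₐ w) :
    pMovedSpace p n u ≤ pMovedSpace p n w :=
  Submodule.span_mono fun _ ⟨i, j, hij, habs, hx⟩ => ⟨i, j, hij, absLe_trans habs h, hx⟩

variable [Fact p.Prime]

theorem dropLast_single (i : Fin n) : dropLast (ZMod p) n (Pi.single i 1) = vecP p n i := by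
  funext k
  simp [dropLast, vecP, Pi.single_apply, Fin.ext_iff]

theorem pMovedSpace_eq_map (w : Perm (Fin n)) :
    pMovedSpace p n w = (movedSpace (ZMod p) w).map (dropLast (ZMod p) n) := by
  rw [movedSpace_eq_span, Submodule.map_span]
  refine le_antisymm (Submodule.span_le.mpr ?_) (Submodule.span_le.mpr ?_)
  · rintro _ ⟨i, j, hij, habs, rfl⟩
    refine Submodule.subset_span ⟨_, ⟨i, j, (swap_absLe_iff_sameCycle hij.ne).mp habs, rfl⟩, ?_⟩
    simp [dropLast_single]
  · rintro _ ⟨_, ⟨i, j, h, rfl⟩, rfl⟩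
    rw [map_sub, dropLast_single, dropLast_single]
    rcases lt_trichotomy i j with hij | rfl | hij
    · exact Submodule.subset_span ⟨i, j, hij, (swap_absLe_iff_sameCycle hij.ne).mpr h, rfl⟩
    · simp
    · rw [← neg_sub]
      exact neg_mem (Submodule.subset_span
        ⟨j, i, hij, (swap_absLe_iff_sameCycle hij.ne).mpr h.symm, rfl⟩)

theorem finrank_pMovedSpace (w : Perm (Fin n)) :
    finrank (ZMod p) (pMovedSpace p n w) = ℓ w := by
  have hinj : Function.Injective (dropLast (ZMod p) n ∘ₗ (movedSpace (ZMod p) w).subtype) :=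
    fun x y h => Subtype.ext (dropLast_injOn n (sum_eq_zero_of_mem_movedSpace x.2)
      (sum_eq_zero_of_mem_movedSpace y.2) h)
  rw [pMovedSpace_eq_map, ← finrank_movedSpace (K := ZMod p),
    ← LinearMap.finrank_range_of_inj hinj, LinearMap.range_comp, Submodule.range_subtype]

theorem vecP_sub_vecP_mem_pMovedSpace_iff {w : Perm (Fin n)} {i j : Fin n} :
    vecP p n i - vecP p n j ∈ pMovedSpace p n w ↔ w.SameCycle i j := by
  rw [pMovedSpace_eq_map, ← dropLast_single, ← dropLast_single, ← map_sub,
    ← single_sub_single_mem_movedSpace_iff (K := ZMod p)]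
  refine ⟨fun ⟨y, hy, hyx⟩ => ?_, Submodule.mem_map_of_mem⟩
  rwa [← dropLast_injOn n (sum_eq_zero_of_mem_movedSpace hy) (by simp) hyx]

end PMovedSpace

theorem ncA_pMoved_embedding_general (n p : ℕ) (hp : p.Prime) :
    (∀ u w : Equiv.Perm (Fin n),
        absLe {t : Equiv.Perm (Fin n) | t.IsSwap} u (finRotate n) →
        absLe {t : Equiv.Perm (Fin n) | t.IsSwap} w (finRotate n) →
        absLe {t : Equiv.Perm (Fin n) | t.IsSwap} u w →
        pMovedSpace p n u ≤ pMovedSpace p n w) ∧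
      Set.InjOn (pMovedSpace p n)
        {w : Equiv.Perm (Fin n) |
          absLe {t : Equiv.Perm (Fin n) | t.IsSwap} w (finRotate n)} ∧
      ∀ w : Equiv.Perm (Fin n),
        absLe {t : Equiv.Perm (Fin n) | t.IsSwap} w (finRotate n) →
        Module.finrank (ZMod p) (pMovedSpace p n w) =
          absLength {t : Equiv.Perm (Fin n) | t.IsSwap} w := by
  have : Fact p.Prime := ⟨hp⟩
  refine ⟨fun u w _ _ huw => pMovedSpace_mono huw, fun u hu w hw h => ?_,
    fun w _ => finrank_pMovedSpace w⟩
  refine (cyclicallyIncreasing_of_absLe_finRotate hu).eq_of_sameCycle_iff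
    (cyclicallyIncreasing_of_absLe_finRotate hw) fun i j => ?_
  rw [← vecP_sub_vecP_mem_pMovedSpace_iff (p := p), h, vecP_sub_vecP_mem_pMovedSpace_iff]

/-- For `n ≥ 2` and any prime `p`, the map `w ↦ M_p(w)` is a rank-preserving poset
embedding of `NC(Sₙ)` (the interval below the Coxeter element `(1 2 … n)` in the
absolute order) into the subspace lattice of `𝔽ₚⁿ⁻¹`: it is order-preserving,
injective, and `dim M_p(w) = ℓ(w)`. -/
theorem ncA_pMoved_embedding (n p : ℕ) (hn : 2 ≤ n) (hp : p.Prime) :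
    (∀ u w : Equiv.Perm (Fin n),
        absLe {t : Equiv.Perm (Fin n) | t.IsSwap} u (finRotate n) →
        absLe {t : Equiv.Perm (Fin n) | t.IsSwap} w (finRotate n) →
        absLe {t : Equiv.Perm (Fin n) | t.IsSwap} u w →
        pMovedSpace p n u ≤ pMovedSpace p n w) ∧
      Set.InjOn (pMovedSpace p n)
        {w : Equiv.Perm (Fin n) |
          absLe {t : Equiv.Perm (Fin n) | t.IsSwap} w (finRotate n)} ∧
      ∀ w : Equiv.Perm (Fin n),
        absLe {t : Equiv.Perm (Fin n) | t.IsSwap} w (finRotate n) →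
        Module.finrank (ZMod p) (pMovedSpace p n w) =
          absLength {t : Equiv.Perm (Fin n) | t.IsSwap} w :=
  ncA_pMoved_embedding_general n p hp
end

section
/- (Link Property for partitions.) Let n ≥ 5, let u_1, …, u_{n−1} be a basis of 𝔽_2^{n−1}, and let S be a subset of {1, …, n−1} with ∅ ≠ S ≠ {1, …, n−1}; put U := span{u_i : i ∈ S}. Suppose that for every subset S′ of {1, …, n−1} with ∅ ≠ S′ ≠ {1, …, n−1}, S′ ≠ S, and either S′ ⊂ S or S ⊂ S′, the subspace span{u_i : i ∈ S′} is a partition subspace. Then U is a partition subspace. -/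
/-- The vector `e_i ∈ 𝔽₂ⁿ⁻¹` for `i` among the first `n-1` indices, and `0` for the
last index (`e_n := 0`). -/
def unitVec (n : ℕ) (i : Fin n) : Fin (n - 1) → ZMod 2 :=
  fun k => if (k : ℕ) = (i : ℕ) then 1 else 0

/-- The subspace of `𝔽₂ⁿ⁻¹` associated to a set partition of `{1, …, n}`. -/
def partSubspace (n : ℕ) (π : Setoid (Fin n)) :
    Submodule (ZMod 2) (Fin (n - 1) → ZMod 2) :=
  Submodule.span (ZMod 2)
    {x | ∃ i j : Fin n, i < j ∧ π.r i j ∧ x = unitVec n i + unitVec n j}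

/-- A subspace of `𝔽₂ⁿ⁻¹` is a partition subspace if it comes from a partition. -/
def IsPartitionSubspace (n : ℕ)
    (U : Submodule (ZMod 2) (Fin (n - 1) → ZMod 2)) : Prop :=
  ∃ π : Setoid (Fin n), U = partSubspace n π

/-!
If `S` has two elements `j ≠ k`, then `S = (S \ {j}) ∪ (S \ {k})` and partition subspaces are
closed under sums (the sum corresponds to the join of partitions). If `S = {i}`, then `⟨u i⟩` is
a partition subspace as soon as `u i` has Hamming weight at most `2`. If it had weight `≥ 3`,
then for every `k ≠ i` the partition subspace `⟨u i, u k⟩` would be spanned by vectors of weight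
`≤ 2` other than `u i`, so `u k` and `u i + u k` would have weight `≤ 2`. Then either some
coordinate vanishes on `u i` and hence on every `u k`, or `u i` is the all-ones vector of weight
`4` and every `u k` has even weight; in both cases a nonzero linear functional kills the basis.
-/

open Finset Submodule Relation

section Hamming

variable {ι β : Type*} [Fintype ι] [AddMonoid β] [DecidableEq β]

theorem hammingNorm_add_le (x y : ι → β) :
    hammingNorm (x + y) ≤ hammingNorm x + hammingNorm y := by
  classical
  refine (card_le_card fun t ht => ?_).trans (card_union_le _ _)
  simp only [mem_filter, mem_univ, true_and, mem_union, Pi.add_apply] at ht ⊢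
  by_contra! h
  simp [h.1, h.2] at ht

theorem hammingNorm_add_two_le_of_apply_eq_zero {x y : ι → β} {t : ι} (hx : x t = 0)
    (hy : y t ≠ 0) :
    hammingNorm x + 2 ≤ hammingNorm y + hammingNorm (x + y) := by
  classical
  let A : Finset ι := {s | y s ≠ 0}
  let B : Finset ι := {s | (x + y) s ≠ 0}
  have htA : t ∈ A := by simp [A, hy]
  have htB : t ∈ B := by simp [B, hx, hy]
  have hsub : insert t ({s | x s ≠ 0} : Finset ι) ⊆ A ∪ B := by
    intro s hs
    rcases mem_insert.mp hs with rfl | hs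
    · exact mem_union_left _ htA
    · simp only [mem_filter, mem_univ, true_and, mem_union, A, B, Pi.add_apply] at hs ⊢
      by_contra! h
      exact hs (by simpa [h.1] using h.2)
  have hunion : hammingNorm x + 1 ≤ (A ∪ B).card := by
    have := card_le_card hsub
    rwa [card_insert_of_notMem (by simp [hx])] at this
  have hinter : 1 ≤ (A ∩ B).card := card_pos.mpr ⟨t, mem_inter.mpr ⟨htA, htB⟩⟩
  have := card_union_add_card_inter A B
  change (A ∪ B).card + (A ∩ B).card = hammingNorm y + hammingNorm (x + y) at this
  omega

end Hamming

section ZModTwo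

variable {ι : Type*} [Fintype ι]

theorem zmodTwo_eq_zero_or_eq_one : ∀ a : ZMod 2, a = 0 ∨ a = 1 := by decide

theorem zmodTwo_eq_one_of_ne_zero {a : ZMod 2} (h : a ≠ 0) : a = 1 :=
  (zmodTwo_eq_zero_or_eq_one a).resolve_left h

theorem sum_apply_eq_hammingNorm (x : ι → ZMod 2) : ∑ t, x t = hammingNorm x := by
  rw [← sum_filter_ne_zero, hammingNorm, card_eq_sum_ones, Nat.cast_sum]
  refine sum_congr rfl fun t ht => ?_
  simpa using zmodTwo_eq_one_of_ne_zero (mem_filter.mp ht).2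

theorem sum_filter_ne_zero_single [DecidableEq ι] (x : ι → ZMod 2) :
    ∑ t with x t ≠ 0, Pi.single t 1 = x := by
  ext s
  by_cases h : x s = 0
  · simp [Finset.sum_apply, Pi.single_apply, h]
  · simp [Finset.sum_apply, Pi.single_apply, zmodTwo_eq_one_of_ne_zero h]

theorem mem_and_add_mem_of_span_eq_span_pair {V : Type*} [AddCommGroup V] [Module (ZMod 2) V]
    {G : Set V} {x y : V} (hG : span (ZMod 2) G = span (ZMod 2) {x, y})
    (hx : x ≠ 0) (hy : y ≠ 0) (hxy : x ≠ y) (hxG : x ∉ G) : y ∈ G ∧ x + y ∈ G := by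
  have hG' : ∀ g ∈ G, g = 0 ∨ g = y ∨ g = x + y := by
    intro g hg
    obtain ⟨a, b, rfl⟩ := mem_span_pair.mp (hG ▸ subset_span hg)
    rcases zmodTwo_eq_zero_or_eq_one a with rfl | rfl <;>
      rcases zmodTwo_eq_zero_or_eq_one b with rfl | rfl <;> simp_all
  have hxG' : x ∈ span (ZMod 2) G := hG ▸ subset_span (by simp)
  constructor
  · by_contra hyG
    have : span (ZMod 2) G ≤ span (ZMod 2) {x + y} := span_le.mpr fun g hg => by
      rcases hG' g hg with rfl | rfl | rfl
      · exact zero_mem _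
      · exact absurd hg hyG
      · exact mem_span_singleton_self _
    obtain ⟨a, ha⟩ := mem_span_singleton.mp (this hxG')
    rcases zmodTwo_eq_zero_or_eq_one a with rfl | rfl <;> simp_all
  · by_contra hxyG
    have : span (ZMod 2) G ≤ span (ZMod 2) {y} := span_le.mpr fun g hg => by
      rcases hG' g hg with rfl | rfl | rfl
      · exact zero_mem _
      · exact mem_span_singleton_self _
      · exact absurd hg hxyG
    obtain ⟨a, ha⟩ := mem_span_singleton.mp (this hxG')
    rcases zmodTwo_eq_zero_or_eq_one a with rfl | rfl <;> simp_all

end ZModTwo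

section Partition

variable {n : ℕ}

theorem hammingNorm_unitVec_le_one (a : Fin n) : hammingNorm (unitVec n a) ≤ 1 :=
  card_le_one.mpr fun s hs t ht => by
    simp only [unitVec, mem_filter, mem_univ, true_and, ne_eq, ite_eq_right_iff,
      one_ne_zero, imp_false, not_not] at hs ht
    exact Fin.ext (hs.trans ht.symm)

theorem hammingNorm_unitVec_add_le_two (a b : Fin n) :
    hammingNorm (unitVec n a + unitVec n b) ≤ 2 :=
  (hammingNorm_add_le _ _).trans (add_le_add (hammingNorm_unitVec_le_one a)
    (hammingNorm_unitVec_le_one b))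

theorem unitVec_castLE (p : Fin (n - 1)) :
    unitVec n (Fin.castLE (Nat.sub_le n 1) p) = Pi.single p 1 := by
  ext t
  simp [unitVec, Pi.single_apply, Fin.ext_iff]

theorem unitVec_eq_zero {a : Fin n} (ha : n - 1 ≤ a) : unitVec n a = 0 := by
  ext t
  simp only [unitVec, Pi.zero_apply, ite_eq_right_iff]
  omega

theorem exists_eq_unitVec_add_unitVec (hn : n ≠ 0) {x : Fin (n - 1) → ZMod 2}
    (hx : hammingNorm x ≤ 2) : ∃ a b : Fin n, x = unitVec n a + unitVec n b := by
  let ω : Fin n := ⟨n - 1, by omega⟩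
  have hω : unitVec n ω = 0 := unitVec_eq_zero le_rfl
  have hs : #{t | x t ≠ 0} ≤ 2 := hx
  rw [← sum_filter_ne_zero_single x]
  interval_cases h : #{t | x t ≠ 0}
  · rw [card_eq_zero.mp h, sum_empty]
    exact ⟨ω, ω, by rw [hω, add_zero]⟩
  · obtain ⟨p, hp⟩ := card_eq_one.mp h
    rw [hp, sum_singleton]
    exact ⟨Fin.castLE (Nat.sub_le n 1) p, ω, by rw [unitVec_castLE, hω, add_zero]⟩
  · obtain ⟨p, q, hpq, hpq'⟩ := card_eq_two.mp h
    rw [hpq', sum_pair hpq]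
    exact ⟨Fin.castLE (Nat.sub_le n 1) p, Fin.castLE (Nat.sub_le n 1) q,
      by rw [unitVec_castLE, unitVec_castLE]⟩

theorem unitVec_add_mem_partSubspace (π : Setoid (Fin n)) {a b : Fin n} (h : π a b) :
    unitVec n a + unitVec n b ∈ partSubspace n π := by
  rcases lt_trichotomy a b with hab | rfl | hab
  · exact subset_span ⟨a, b, hab, h, rfl⟩
  · rw [ZModModule.add_self]
    exact zero_mem _
  · rw [add_comm]
    exact subset_span ⟨b, a, hab, π.symm h, rfl⟩

theorem partSubspace_eqvGen (r : Fin n → Fin n → Prop) :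
    partSubspace n (EqvGen.setoid r) =
      span (ZMod 2) {x | ∃ a b, r a b ∧ x = unitVec n a + unitVec n b} := by
  refine le_antisymm (span_le.mpr ?_) (span_le.mpr ?_)
  · rintro _ ⟨a, b, -, hab, rfl⟩
    induction hab with
    | rel a b h => exact subset_span ⟨a, b, h, rfl⟩
    | refl a => rw [ZModModule.add_self]; exact zero_mem _
    | symm a b _ ih => rwa [add_comm]
    | trans a b c _ _ ihab ihbc =>
      rw [← ZModModule.add_add_add_cancel _ (unitVec n b)]
      exact add_mem ihab ihbc
  · rintro _ ⟨a, b, hab, rfl⟩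
    exact unitVec_add_mem_partSubspace _ (EqvGen.rel _ _ hab)

theorem partSubspace_eq_span (π : Setoid (Fin n)) :
    partSubspace n π = span (ZMod 2) {x | ∃ a b, π a b ∧ x = unitVec n a + unitVec n b} := by
  simpa using partSubspace_eqvGen π.r

theorem partSubspace_sup (π σ : Setoid (Fin n)) :
    partSubspace n (π ⊔ σ) = partSubspace n π ⊔ partSubspace n σ := by
  rw [Setoid.sup_eq_eqvGen, partSubspace_eqvGen, partSubspace_eq_span, partSubspace_eq_span,
    ← span_union]
  congr 1
  ext x
  simp only [Set.mem_ofPred_eq, Set.mem_union, or_and_right, exists_or]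

theorem IsPartitionSubspace.sup {U V : Submodule (ZMod 2) (Fin (n - 1) → ZMod 2)}
    (hU : IsPartitionSubspace n U) (hV : IsPartitionSubspace n V) :
    IsPartitionSubspace n (U ⊔ V) := by
  obtain ⟨π, rfl⟩ := hU
  obtain ⟨σ, rfl⟩ := hV
  exact ⟨π ⊔ σ, (partSubspace_sup π σ).symm⟩

theorem isPartitionSubspace_span_unitVec_add (a b : Fin n) :
    IsPartitionSubspace n (span (ZMod 2) {unitVec n a + unitVec n b}) := by
  refine ⟨EqvGen.setoid fun s t => s = a ∧ t = b, ?_⟩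
  rw [partSubspace_eqvGen]
  congr 1
  ext x
  simp

theorem hammingNorm_le_two_of_isPartitionSubspace_span_pair {x y : Fin (n - 1) → ZMod 2}
    (h : IsPartitionSubspace n (span (ZMod 2) {x, y})) (hy : y ≠ 0) (hxy : x ≠ y)
    (hx : 2 < hammingNorm x) : hammingNorm y ≤ 2 ∧ hammingNorm (x + y) ≤ 2 := by
  obtain ⟨π, hπ⟩ := h
  have hgen : ∀ g ∈ {g | ∃ a b : Fin n, a < b ∧ π a b ∧ g = unitVec n a + unitVec n b},
      hammingNorm g ≤ 2 := by
    rintro _ ⟨a, b, -, -, rfl⟩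
    exact hammingNorm_unitVec_add_le_two a b
  obtain ⟨hyG, hxyG⟩ := mem_and_add_mem_of_span_eq_span_pair hπ.symm
    (hammingNorm_pos_iff.mp (by omega)) hy hxy fun hxG => (hgen x hxG).not_gt hx
  exact ⟨hgen y hyG, hgen _ hxyG⟩

end Partition

theorem hammingNorm_le_two_of_forall_ne {ι κ : Type*} [Fintype ι] [Nontrivial κ]
    {u : κ → ι → ZMod 2} (hu : span (ZMod 2) (Set.range u) = ⊤) (hι : 4 ≤ Fintype.card ι)
    (i : κ) (h : ∀ k ≠ i, hammingNorm (u k) ≤ 2 ∧ hammingNorm (u i + u k) ≤ 2) :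
    hammingNorm (u i) ≤ 2 := by
  classical
  by_contra! hi
  suffices ∃ φ : (ι → ZMod 2) →ₗ[ZMod 2] ZMod 2, φ ≠ 0 ∧ ∀ k, φ (u k) = 0 by
    obtain ⟨φ, hφ, hφu⟩ := this
    exact hφ (LinearMap.ext_on_range hu hφu)
  by_cases hzero : ∃ t, u i t = 0
  · obtain ⟨t, ht⟩ := hzero
    refine ⟨LinearMap.proj t, fun h0 => by simpa using LinearMap.congr_fun h0 (Pi.single t 1),
      fun k => ?_⟩
    rcases eq_or_ne k i with rfl | hk
    · exact ht
    by_contra hkt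
    have := hammingNorm_add_two_le_of_apply_eq_zero ht hkt
    have := h k hk
    omega
  · push Not at hzero
    have hfull : hammingNorm (u i) = Fintype.card ι := by
      rw [hammingNorm, filter_true_of_mem fun t _ => hzero t, card_univ]
    have htri (k : κ) : hammingNorm (u i) ≤ hammingNorm (u k) + hammingNorm (u i + u k) := by
      simpa [add_left_comm (u k), ZModModule.add_self] using hammingNorm_add_le (u k) (u i + u k)
    obtain ⟨k₀, hk₀⟩ := exists_ne i
    have hcard : Fintype.card ι = 4 := by have := htri k₀; have := h k₀ hk₀; omega
    obtain ⟨t⟩ : Nonempty ι := Fintype.card_pos_iff.mp (by omega)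
    refine ⟨∑ s, LinearMap.proj s, fun h0 => by simpa using LinearMap.congr_fun h0 (Pi.single t 1),
      fun k => ?_⟩
    have heven : hammingNorm (u k) = 4 ∨ hammingNorm (u k) = 2 := by
      rcases eq_or_ne k i with rfl | hk
      · omega
      · have := htri k; have := h k hk; omega
    simp only [LinearMap.coe_sum, Finset.sum_apply, LinearMap.coe_proj, Function.eval,
      sum_apply_eq_hammingNorm]
    rcases heven with h' | h' <;> rw [h'] <;> rfl

theorem isPartitionSubspace_span_singleton {n : ℕ} (hn : 5 ≤ n)
    {u : Fin (n - 1) → Fin (n - 1) → ZMod 2} (hu1 : LinearIndependent (ZMod 2) u)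
    (hu2 : span (ZMod 2) (Set.range u) = ⊤) (i : Fin (n - 1))
    (hpair : ∀ k ≠ i, IsPartitionSubspace n (span (ZMod 2) {u i, u k})) :
    IsPartitionSubspace n (span (ZMod 2) {u i}) := by
  have : Nontrivial (Fin (n - 1)) := Fin.nontrivial_iff_two_le.mpr (by omega)
  have hwt : hammingNorm (u i) ≤ 2 := by
    by_contra! hi
    exact hi.not_ge (hammingNorm_le_two_of_forall_ne hu2 (by simp; omega) i fun k hk =>
      hammingNorm_le_two_of_isPartitionSubspace_span_pair (hpair k hk) (hu1.ne_zero k)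
        (hu1.injective.ne hk.symm) hi)
  obtain ⟨a, b, hab⟩ := exists_eq_unitVec_add_unitVec (by omega) hwt
  rw [hab]
  exact isPartitionSubspace_span_unitVec_add a b

theorem linkProperty_partition_general (n : ℕ) (hn : 5 ≤ n)
    (u : Fin (n - 1) → Fin (n - 1) → ZMod 2)
    (hu1 : LinearIndependent (ZMod 2) u)
    (hu2 : Submodule.span (ZMod 2) (Set.range u) = ⊤)
    (S : Set (Fin (n - 1))) (hS1 : S ≠ ∅)
    (h : ∀ S' : Set (Fin (n - 1)), S' ≠ ∅ → S' ≠ Set.univ → S' ≠ S →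
      S' ⊂ S ∨ S ⊂ S' →
      IsPartitionSubspace n (Submodule.span (ZMod 2) (u '' S'))) :
    IsPartitionSubspace n (Submodule.span (ZMod 2) (u '' S)) := by
  rcases S.subsingleton_or_nontrivial with hS | ⟨j, hj, k, hk, hjk⟩
  · obtain ⟨i, rfl⟩ := hS.eq_empty_or_singleton.resolve_left hS1
    rw [Set.image_singleton]
    refine isPartitionSubspace_span_singleton hn hu1 hu2 i fun k hk => ?_
    have hss : {i} ⊂ ({i, k} : Set (Fin (n - 1))) :=
      Set.ssubset_iff_subset_ne.mpr ⟨by simp, fun he => hk (by simpa using he.ge (by simp))⟩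
    have hne : ({i, k} : Set (Fin (n - 1))) ≠ Set.univ := fun huniv => by
      have := congrArg Set.ncard huniv
      rw [Set.ncard_pair hk.symm, Set.ncard_univ, Nat.card_eq_fintype_card,
        Fintype.card_fin] at this
      omega
    rw [← Set.image_pair]
    exact h {i, k} (Set.insert_nonempty i {k}).ne_empty hne hss.ne' (Or.inr hss)
  · have hdel (j : Fin (n - 1)) (hj : j ∈ S) (k : Fin (n - 1)) (hk : k ∈ S) (hjk : j ≠ k) :
        IsPartitionSubspace n (span (ZMod 2) (u '' (S \ {j}))) := by
      have hss : S \ {j} ⊂ S := Set.sdiff_singleton_ssubset.mpr hj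
      refine h _ (Set.nonempty_iff_ne_empty.mp ⟨k, hk, hjk.symm⟩) (fun huniv => ?_) hss.ne
        (Or.inl hss)
      exact (huniv ▸ Set.mem_univ j : j ∈ S \ {j}).2 rfl
    have hS : S = (S \ {j}) ∪ (S \ {k}) := by
      rw [← Set.sdiff_inter, Set.singleton_inter_eq_empty.mpr (by simpa using hjk),
        Set.sdiff_empty]
    rw [hS, Set.image_union, span_union]
    exact (hdel j hj k hk hjk).sup (hdel k hk j hj hjk.symm)

/-- Link Property for partitions: let `n ≥ 5`, let `u₁, …, u_{n-1}` be a basis of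
`𝔽₂ⁿ⁻¹` and let `U` be the span of `{uᵢ : i ∈ S}` for a proper nonempty subset
`S`.  If for every proper nonempty `S'` comparable to (and distinct from) `S` the
subspace spanned by `{uᵢ : i ∈ S'}` is a partition subspace, then so is `U`. -/
theorem linkProperty_partition (n : ℕ) (hn : 5 ≤ n)
    (u : Fin (n - 1) → Fin (n - 1) → ZMod 2)
    (hu1 : LinearIndependent (ZMod 2) u)
    (hu2 : Submodule.span (ZMod 2) (Set.range u) = ⊤)
    (S : Set (Fin (n - 1))) (hS1 : S ≠ ∅) (hS2 : S ≠ Set.univ)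
    (h : ∀ S' : Set (Fin (n - 1)), S' ≠ ∅ → S' ≠ Set.univ → S' ≠ S →
      S' ⊂ S ∨ S ⊂ S' →
      IsPartitionSubspace n (Submodule.span (ZMod 2) (u '' S'))) :
    IsPartitionSubspace n (Submodule.span (ZMod 2) (u '' S)) :=
  linkProperty_partition_general n hn u hu1 hu2 S hS1 h
end
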